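/- Let G = P_s □ P_t be a grid graph with s ≥ t ≥ 2, and let k be an integer with 2 ≤ k ≤ s. Then the set S = {u_1, ..., u_k} × {v_1, v_t}, of size 2k, is a k-resolving set for G. -/

import Mathlib

/-!
In the grid, `d((i, j), (g, h)) = |i - g| + |j - h|`. If two vertices lie in the same column
`v_j`, then in each of the columns `v₁`, `v_t` at most one landmark `(u_m, v)` fails to
separate them (its row index would be the midpoint of theirs), so at least `2k - 2 ≥ k` landmarks
separate them. If their column indices differ, then for every `m ≤ k` one of `(u_m, v₁)`,
`(u_m, v_t)` separates them, since subtracting the two agreements gives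
`|j - 1| - |j - t| = |h - 1| - |h - t|`, i.e. `j = h`.
-/

def IsKResolvingSet {V : Type*} [DecidableEq V] (G : SimpleGraph V) (k : ℕ) (S : Finset V) : Prop :=
  ∀ u w : V, u ≠ w → k ≤ (S.filter (fun v => G.dist u v ≠ G.dist w v)).card

open SimpleGraph Finset

lemma Nat.eq_of_dist_eq_dist {a c i j : ℕ} (hac : a ≠ c) (hi : a.dist i = c.dist i)
    (hj : a.dist j = c.dist j) : i = j := by
  unfold Nat.dist at *
  omega

lemma Nat.eq_of_add_dist_eq_of_add_dist_eq {n b d x y : ℕ} (hb : b ≤ n) (hd : d ≤ n)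
    (h₀ : x + b.dist 0 = y + d.dist 0) (hn : x + b.dist n = y + d.dist n) : b = d := by
  unfold Nat.dist at *
  omega

namespace SimpleGraph

lemma Walk.natDist_le_length {V : Type*} {G : SimpleGraph V} (f : V → ℕ)
    (hf : ∀ x y, G.Adj x y → Nat.dist (f x) (f y) ≤ 1) {u v : V} (p : G.Walk u v) :
    Nat.dist (f u) (f v) ≤ p.length := by
  induction p with
  | nil => simp
  | @cons u x v h q ih =>
    calc Nat.dist (f u) (f v) ≤ Nat.dist (f u) (f x) + Nat.dist (f x) (f v) :=
          Nat.dist.triangle_inequality _ _ _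
      _ ≤ (cons h q).length := by rw [Walk.length_cons]; linarith [hf u x h]

lemma dist_boxProd {α β : Type*} {G : SimpleGraph α} {H : SimpleGraph β} {x y : α × β}
    (h₁ : G.Reachable x.1 y.1) (h₂ : H.Reachable x.2 y.2) :
    (G □ H).dist x y = G.dist x.1 y.1 + H.dist x.2 y.2 := by
  have h : (G □ H).Reachable x y := reachable_boxProd.2 ⟨h₁, h₂⟩
  apply Nat.cast_injective (R := ℕ∞)
  rw [Nat.cast_add, h.coe_dist_eq_edist, h₁.coe_dist_eq_edist, h₂.coe_dist_eq_edist,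
    edist_boxProd]

lemma pathGraph_exists_walk_length_eq {n : ℕ} (i j : Fin n) :
    ∃ p : (pathGraph n).Walk i j, p.length = Nat.dist i j := by
  induction hm : Nat.dist i j generalizing i with
  | zero =>
    obtain rfl : i = j := Fin.ext (Nat.eq_of_dist_eq_zero hm)
    exact ⟨.nil, rfl⟩
  | succ m ih =>
    unfold Nat.dist at hm
    rcases lt_or_gt_of_ne (show (i : ℕ) ≠ j by omega) with hij | hji
    · obtain ⟨p, hp⟩ := ih ⟨i + 1, by omega⟩ (by unfold Nat.dist; dsimp only; omega)
      exact ⟨.cons (pathGraph_adj.2 (.inl rfl)) p, by simp [hp]⟩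
    · obtain ⟨p, hp⟩ := ih ⟨i - 1, by omega⟩ (by unfold Nat.dist; dsimp only; omega)
      exact ⟨.cons (pathGraph_adj.2 (.inr (by dsimp only; omega))) p, by simp [hp]⟩

lemma pathGraph_dist {n : ℕ} (i j : Fin n) : (pathGraph n).dist i j = Nat.dist i j := by
  obtain ⟨p, hp⟩ := pathGraph_exists_walk_length_eq i j
  obtain ⟨q, hq⟩ := (pathGraph_preconnected n i j).exists_walk_length_eq_dist
  refine le_antisymm (hp ▸ dist_le p) (hq ▸ q.natDist_le_length Fin.val fun x y hxy => ?_)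
  rw [pathGraph_adj] at hxy
  unfold Nat.dist
  omega

section Grid

variable {s t : ℕ}

lemma grid_dist (x y : Fin s × Fin t) :
    (pathGraph s □ pathGraph t).dist x y = Nat.dist x.1 y.1 + Nat.dist x.2 y.2 := by
  rw [dist_boxProd (pathGraph_preconnected s _ _) (pathGraph_preconnected t _ _),
    pathGraph_dist, pathGraph_dist]

lemma grid_card_filter_dist_eq_le_card_image_snd {u w : Fin s × Fin t} (huw : u ≠ w)
    (hsnd : u.2 = w.2) (S : Finset (Fin s × Fin t)) :
    #{v ∈ S | (pathGraph s □ pathGraph t).dist u v = (pathGraph s □ pathGraph t).dist w v}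
      ≤ #(S.image Prod.snd) := by
  have hfst : (u.1 : ℕ) ≠ w.1 := fun h => huw (Prod.ext (Fin.ext h) hsnd)
  refine card_le_card_of_injOn Prod.snd (fun v hv => mem_image_of_mem _ (mem_filter.1 hv).1) ?_
  rintro ⟨i, e⟩ hi ⟨j, e'⟩ hj (rfl : e = e')
  simp only [mem_coe, mem_filter, grid_dist, hsnd, add_left_inj] at hi hj
  simp only [Prod.mk.injEq, and_true]
  exact Fin.ext (Nat.eq_of_dist_eq_dist hfst hi.2 hj.2)

lemma grid_card_le_card_filter_dist_ne {u w : Fin s × Fin t} (hsnd : u.2 ≠ w.2)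
    (F : Finset (Fin s)) {e₀ e₁ : Fin t} (h₀ : (e₀ : ℕ) = 0) (h₁ : (e₁ : ℕ) = t - 1) :
    #F ≤ #{v ∈ F ×ˢ {e₀, e₁} |
      (pathGraph s □ pathGraph t).dist u v ≠ (pathGraph s □ pathGraph t).dist w v} := by
  refine (card_le_card fun i hi => ?_).trans (card_image_le (f := Prod.fst))
  by_contra hnot
  simp only [mem_image, mem_filter, mem_product, mem_insert, mem_singleton, Prod.exists,
    exists_and_right, exists_eq_right, grid_dist, not_exists, not_and, not_not] at hnot
  have h₀' := hnot e₀ ⟨hi, .inl rfl⟩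
  have h₁' := hnot e₁ ⟨hi, .inr rfl⟩
  rw [h₀] at h₀'
  rw [h₁] at h₁'
  exact hsnd (Fin.ext (Nat.eq_of_add_dist_eq_of_add_dist_eq (by omega) (by omega) h₀' h₁'))

end Grid

end SimpleGraph

/-- In the grid graph `P_s □ P_t` with `s ≥ t ≥ 2`, for `2 ≤ k ≤ s`, the set
`S = {u₁, …, u_k} × {v₁, v_t}` has size `2k` and is a `k`-resolving set. -/
theorem grid_kResolvingSet_case_k_le_s (s t : ℕ) (ht : 2 ≤ t)
    (k : ℕ) (hk1 : 2 ≤ k) (hk2 : k ≤ s) :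
    let S : Finset (Fin s × Fin t) :=
      (Finset.univ.filter (fun i : Fin s => (i : ℕ) < k)) ×ˢ
        ({⟨0, by omega⟩, ⟨t - 1, by omega⟩} : Finset (Fin t))
    S.card = 2 * k ∧
      IsKResolvingSet ((SimpleGraph.pathGraph s).boxProd (SimpleGraph.pathGraph t)) k S := by
  intro S
  have hF : #{i : Fin s | (i : ℕ) < k} = k := by rw [Fin.card_filter_val_lt]; omega
  have hends : (⟨0, by omega⟩ : Fin t) ≠ ⟨t - 1, by omega⟩ := by simp only [ne_eq, Fin.ext_iff]; omega
  have hS : #S = 2 * k := by rw [card_product, hF, card_pair hends, mul_comm]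
  refine ⟨hS, fun u w huw => ?_⟩
  by_cases hsnd : u.2 = w.2
  · have hfew := (grid_card_filter_dist_eq_le_card_image_snd huw hsnd S).trans
      ((card_le_card subset_product_image_snd).trans card_le_two)
    have hsplit := card_filter_add_card_filter_not (s := S)
      fun v => (pathGraph s □ pathGraph t).dist u v ≠ (pathGraph s □ pathGraph t).dist w v
    simp only [not_not] at hsplit
    omega
  · exact hF ▸ grid_card_le_card_filter_dist_ne hsnd _ rfl rfl
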